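/- arXiv:2601.09955 — 3 statements merged into one kernel-verified Lean document; each statement's English description precedes it below -/
import Mathlib

section
/- The matrices in the family {A_g : g ∈ C} ∪ {B_g : g ∈ C} pairwise commute if and only if n ≤ 2. Equivalently, there exist two matrices in this family that do not commute if and only if n ≥ 3 (i.e. the Tatra scheme is noncommutative exactly when n ≥ 3). -/
open Classical Matrix

namespace Tatra

variable (F : Type) [Field F] [Fintype F] (K : Subgroup Fˣ)

/-- The equivalence relation on nonzero vectors of `F²` identifying `v` with `x • v` for `x ∈ K`. -/
def ksetoid : Setoid {v : Fin 2 → F // v ≠ 0} where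
  r u v := ∃ x : Fˣ, x ∈ K ∧ ((x : F) • u.1 = v.1)
  iseqv := by
    refine ⟨fun u => ⟨1, K.one_mem, by simp⟩, ?_, ?_⟩
    · rintro u v ⟨x, hx, h⟩
      refine ⟨x⁻¹, K.inv_mem hx, ?_⟩
      rw [← h, smul_smul, Units.val_inv_eq_inv_val, inv_mul_cancel₀ x.ne_zero, one_smul]
    · rintro u v w ⟨x, hx, h1⟩ ⟨y, hy, h2⟩
      refine ⟨y * x, K.mul_mem hy hx, ?_⟩
      rw [Units.val_mul, mul_smul, h1, h2]

/-- The point set `Ω` of the Tatra scheme. -/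
abbrev Om := Quotient (ksetoid F K)

/-- The cyclic group `C = Fˣ/K`. -/
abbrev CC := Fˣ ⧸ K

noncomputable instance : Fintype (Om F K) := Fintype.ofFinite _

noncomputable instance : Fintype (CC F K) := @Fintype.ofFinite _ (Quotient.finite _)

/-- The relation `r_g = {(α, β) : β = gα}` on `Ω`. -/
def rrel (g : CC F K) : Set (Om F K × Om F K) :=
  {p | ∃ (u v : {w : Fin 2 → F // w ≠ 0}) (y : Fˣ),
    Quotient.mk (ksetoid F K) u = p.1 ∧ Quotient.mk (ksetoid F K) v = p.2 ∧
    (QuotientGroup.mk y : CC F K) = g ∧ ((y : F) • u.1 = v.1)}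

/-- `det(u,v) = u₁v₂ - u₂v₁`. -/
def dt (u v : {w : Fin 2 → F // w ≠ 0}) : F := u.1 0 * v.1 1 - u.1 1 * v.1 0

/-- The relation `s_g = {(Ku, Kv) : det(u,v) ∈ g}` on `Ω`. -/
def srel (g : CC F K) : Set (Om F K × Om F K) :=
  {p | ∃ (u v : {w : Fin 2 → F // w ≠ 0}) (y : Fˣ),
    Quotient.mk (ksetoid F K) u = p.1 ∧ Quotient.mk (ksetoid F K) v = p.2 ∧
    (QuotientGroup.mk y : CC F K) = g ∧ (y : F) = dt F u v}

/-- Adjacency matrix `A_g` of `r_g`. -/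
noncomputable def Amat (g : CC F K) : Matrix (Om F K) (Om F K) ℤ :=
  Matrix.of fun α β => if (α, β) ∈ rrel F K g then 1 else 0

/-- Adjacency matrix `B_g` of `s_g`. -/
noncomputable def Bmat (g : CC F K) : Matrix (Om F K) (Om F K) ℤ :=
  Matrix.of fun α β => if (α, β) ∈ srel F K g then 1 else 0

/-- The all-ones matrix `J`. -/
noncomputable def Jmat : Matrix (Om F K) (Om F K) ℤ := Matrix.of fun _ _ => 1

/-- `A_C = Σ_{g ∈ C} A_g`. -/
noncomputable def AC : Matrix (Om F K) (Om F K) ℤ := ∑ g : CC F K, Amat F K g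

/-- Sum `A_X = Σ_{g ∈ X} A_g` for `X ⊆ C`. -/
noncomputable def AmatX (X : Set (CC F K)) : Matrix (Om F K) (Om F K) ℤ :=
  ∑ g ∈ (Set.toFinite X).toFinset, Amat F K g

/-- Sum `B_Y = Σ_{g ∈ Y} B_g` for `Y ⊆ C`. -/
noncomputable def BmatX (Y : Set (CC F K)) : Matrix (Om F K) (Om F K) ℤ :=
  ∑ g ∈ (Set.toFinite Y).toFinset, Bmat F K g

/-- `r_X = ∪_{g ∈ X} r_g`. -/
def rrelX (X : Set (CC F K)) : Set (Om F K × Om F K) := ⋃ g ∈ X, rrel F K g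

/-- `s_Y = ∪_{g ∈ Y} s_g`. -/
def srelX (Y : Set (CC F K)) : Set (Om F K × Om F K) := ⋃ g ∈ Y, srel F K g

/-- The line `Cα` through a point `α ∈ Ω`. -/
def line (α : Om F K) : Set (Om F K) := {β | ∃ g : CC F K, (α, β) ∈ rrel F K g}

/-- The image `t^f` of a binary relation `t` under a permutation `f` of `Ω`. -/
def relImage (f : Equiv.Perm (Om F K)) (t : Set (Om F K × Om F K)) : Set (Om F K × Om F K) :=
  (fun p => (f p.1, f p.2)) '' t

/-- `f` is the permutation `f_{T,σ} : Kv ↦ K(T·v^σ)` of `Ω`. -/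
def Implements (T : Matrix (Fin 2) (Fin 2) F) (σ : F ≃+* F) (f : Equiv.Perm (Om F K)) : Prop :=
  ∀ u v : {w : Fin 2 → F // w ≠ 0}, T.mulVec (fun i => σ (u.1 i)) = v.1 →
    f (Quotient.mk (ksetoid F K) u) = Quotient.mk (ksetoid F K) v

end Tatra

/-! `A_g` is the permutation matrix of `α ↦ gα`, and since `det` is bilinear, translating either
argument of `s_h` by `g` gives `s_{g⁻¹h}`: `A_g B_h = B_{g⁻¹h}` and `B_h A_g = B_{gh}`. As `g ↦ B_g`
is injective, `A_g` commutes with `B_h` exactly when `g = g⁻¹`. Conversely, if every element of `C`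
is an involution, then `B_g = B_1 A_g = A_g B_1`, so `B_g B_h = B_1 A_{gh} B_1` is symmetric in
`g, h`. Hence the family commutes iff `C` has exponent dividing `2`, which for the cyclic group `C`
of order `n` means `n ≤ 2`. -/

theorem forall_inv_eq_self_iff_card_le_two {G : Type*} [Group G] [IsCyclic G] [Finite G] :
    (∀ g : G, g⁻¹ = g) ↔ Nat.card G ≤ 2 := by
  have hpos : 0 < Nat.card G := Nat.card_pos
  calc (∀ g : G, g⁻¹ = g) ↔ ∀ g : G, g ^ 2 = 1 := by
        simp only [inv_eq_iff_mul_eq_one, sq]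
    _ ↔ Nat.card G ∣ 2 := by
        rw [← Monoid.exponent_dvd_iff_forall_pow_eq_one, IsCyclic.exponent_eq_card]
    _ ↔ Nat.card G ≤ 2 := by
        refine ⟨Nat.le_of_dvd two_pos, fun h => ?_⟩
        interval_cases Nat.card G <;> norm_num

namespace Tatra

variable {F : Type} [Field F] {K : Subgroup Fˣ}

def usmul (y : Fˣ) (u : {w : Fin 2 → F // w ≠ 0}) : {w : Fin 2 → F // w ≠ 0} :=
  ⟨(y : F) • u.1, smul_ne_zero y.ne_zero u.2⟩

lemma usmul_mul (y z : Fˣ) (u : {w : Fin 2 → F // w ≠ 0}) :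
    usmul (y * z) u = usmul y (usmul z u) := by
  simp [usmul, smul_smul]

lemma usmul_one (u : {w : Fin 2 → F // w ≠ 0}) : usmul 1 u = u := by
  simp [usmul]

instance : SMul (CC F K) (Om F K) where
  smul g α := Quotient.liftOn₂ g α (fun y u => Quotient.mk (ksetoid F K) (usmul y u)) (by
    rintro y u y' u' hy ⟨x, hxK, hx⟩
    have hy' : y⁻¹ * y' ∈ K := QuotientGroup.leftRel_apply.mp hy
    refine Quotient.sound ⟨y⁻¹ * y' * x, K.mul_mem hy' hxK, ?_⟩
    change ((y⁻¹ * y' * x : Fˣ) : F) • (y : F) • u.1 = (y' : F) • u'.1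
    rw [← hx, smul_smul, smul_smul, ← Units.val_mul, ← Units.val_mul, mul_comm _ y]
    group)

lemma mk_smul_mk (y : Fˣ) (u : {w : Fin 2 → F // w ≠ 0}) :
    (QuotientGroup.mk y : CC F K) • Quotient.mk (ksetoid F K) u
      = Quotient.mk (ksetoid F K) (usmul y u) := rfl

instance : MulAction (CC F K) (Om F K) where
  one_smul α := by
    obtain ⟨u, rfl⟩ := Quotient.exists_rep α
    rw [← QuotientGroup.mk_one, mk_smul_mk, usmul_one]
  mul_smul g h α := by
    obtain ⟨y, rfl⟩ := QuotientGroup.mk_surjective g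
    obtain ⟨z, rfl⟩ := QuotientGroup.mk_surjective h
    obtain ⟨u, rfl⟩ := Quotient.exists_rep α
    rw [← QuotientGroup.mk_mul, mk_smul_mk, mk_smul_mk, mk_smul_mk, usmul_mul]

lemma mem_rrel_iff (g : CC F K) (α β : Om F K) : (α, β) ∈ rrel F K g ↔ β = g • α := by
  constructor
  · rintro ⟨u, v, y, rfl, rfl, rfl, hy⟩
    rw [mk_smul_mk]
    exact congrArg _ (Subtype.ext hy.symm)
  · rintro rfl
    obtain ⟨y, rfl⟩ := QuotientGroup.mk_surjective g
    obtain ⟨u, rfl⟩ := Quotient.exists_rep α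
    exact ⟨u, usmul y u, y, rfl, rfl, rfl, rfl⟩

lemma mem_srel_mk_iff (g : CC F K) (u v : {w : Fin 2 → F // w ≠ 0}) :
    (Quotient.mk (ksetoid F K) u, Quotient.mk (ksetoid F K) v) ∈ srel F K g ↔
      ∃ y : Fˣ, (y : F) = dt F u v ∧ (QuotientGroup.mk y : CC F K) = g := by
  constructor
  · rintro ⟨u', v', y, hu, hv, rfl, hy⟩
    obtain ⟨x, hxK, hx⟩ := Quotient.exact hu
    obtain ⟨z, hzK, hz⟩ := Quotient.exact hv
    refine ⟨x * z * y, ?_, ?_⟩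
    · simp only [dt, hy, ← hx, ← hz, Units.val_mul, Pi.smul_apply, smul_eq_mul]
      ring
    · rw [QuotientGroup.mk_mul, (QuotientGroup.eq_one_iff _).mpr (K.mul_mem hxK hzK)]
      exact one_mul (QuotientGroup.mk y : CC F K)
  · rintro ⟨y, hy, hg⟩
    exact ⟨u, v, y, rfl, rfl, hg, hy⟩

lemma dt_usmul_left (y : Fˣ) (u v : {w : Fin 2 → F // w ≠ 0}) :
    dt F (usmul y u) v = y * dt F u v := by
  simp only [dt, usmul, Pi.smul_apply, smul_eq_mul]; ring

lemma dt_usmul_right (y : Fˣ) (u v : {w : Fin 2 → F // w ≠ 0}) :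
    dt F u (usmul y v) = y * dt F u v := by
  simp only [dt, usmul, Pi.smul_apply, smul_eq_mul]; ring

lemma mem_srel_iff_of_dt_mul {u v u' v' : {w : Fin 2 → F // w ≠ 0}} (y : Fˣ)
    (hdt : dt F u' v' = y * dt F u v) (g : CC F K) :
    (Quotient.mk (ksetoid F K) u', Quotient.mk (ksetoid F K) v') ∈ srel F K g ↔
      (Quotient.mk (ksetoid F K) u, Quotient.mk (ksetoid F K) v) ∈
        srel F K ((QuotientGroup.mk y)⁻¹ * g) := by
  rw [mem_srel_mk_iff, mem_srel_mk_iff, hdt]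
  constructor
  · rintro ⟨z, hz, rfl⟩
    refine ⟨y⁻¹ * z, ?_, by rw [QuotientGroup.mk_mul, QuotientGroup.mk_inv]⟩
    rw [Units.val_mul, Units.val_inv_eq_inv_val, hz, inv_mul_cancel_left₀ y.ne_zero]
  · rintro ⟨z, hz, hzg⟩
    exact ⟨y * z, by rw [Units.val_mul, hz], by rw [QuotientGroup.mk_mul, hzg, mul_inv_cancel_left]⟩

lemma smul_mem_srel_left_iff (g h : CC F K) (α β : Om F K) :
    (g • α, β) ∈ srel F K h ↔ (α, β) ∈ srel F K (g⁻¹ * h) := by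
  obtain ⟨y, rfl⟩ := QuotientGroup.mk_surjective g
  obtain ⟨u, rfl⟩ := Quotient.exists_rep α
  obtain ⟨v, rfl⟩ := Quotient.exists_rep β
  exact mem_srel_iff_of_dt_mul y (dt_usmul_left y u v) h

lemma smul_mem_srel_right_iff (g h : CC F K) (α β : Om F K) :
    (α, g • β) ∈ srel F K h ↔ (α, β) ∈ srel F K (g⁻¹ * h) := by
  obtain ⟨y, rfl⟩ := QuotientGroup.mk_surjective g
  obtain ⟨u, rfl⟩ := Quotient.exists_rep α
  obtain ⟨v, rfl⟩ := Quotient.exists_rep β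
  exact mem_srel_iff_of_dt_mul y (dt_usmul_right y u v) h

lemma Bmat_injective : Function.Injective (Bmat F K) := by
  intro g h hgh
  obtain ⟨y, rfl⟩ := QuotientGroup.mk_surjective g
  let u : {w : Fin 2 → F // w ≠ 0} := ⟨![1, 0], by simp⟩
  let v : {w : Fin 2 → F // w ≠ 0} := ⟨![0, (y : F)], by simp⟩
  have hdt : dt F u v = y := by simp [dt, u, v]
  have hmem : (Quotient.mk (ksetoid F K) u, Quotient.mk (ksetoid F K) v) ∈
      srel F K (QuotientGroup.mk y) := (mem_srel_mk_iff _ u v).mpr ⟨y, hdt.symm, rfl⟩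
  have hmem' : (Quotient.mk (ksetoid F K) u, Quotient.mk (ksetoid F K) v) ∈ srel F K h := by
    have := congrFun (congrFun hgh (Quotient.mk _ u)) (Quotient.mk _ v)
    simpa [Bmat, hmem] using this
  obtain ⟨z, hz, rfl⟩ := (mem_srel_mk_iff h u v).mp hmem'
  rw [Units.ext (hz.trans hdt)]

variable [Fintype F]

lemma Amat_mul (g : CC F K) (M : Matrix (Om F K) (Om F K) ℤ) :
    Amat F K g * M = Matrix.of fun α β => M (g • α) β := by
  ext α β
  simp [Matrix.mul_apply, Amat, mem_rrel_iff]

lemma mul_Amat (g : CC F K) (M : Matrix (Om F K) (Om F K) ℤ) :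
    M * Amat F K g = Matrix.of fun α β => M α (g⁻¹ • β) := by
  ext α β
  have hsolve : ∀ γ : Om F K, β = g • γ ↔ γ = g⁻¹ • β := fun γ =>
    ⟨fun h => by rw [h, inv_smul_smul], fun h => by rw [h, smul_inv_smul]⟩
  simp [Matrix.mul_apply, Amat, mem_rrel_iff, hsolve]

lemma Amat_mul_Amat (g h : CC F K) : Amat F K g * Amat F K h = Amat F K (g * h) := by
  rw [Amat_mul]
  ext α β
  simp only [Amat, Matrix.of_apply, mem_rrel_iff, smul_smul, mul_comm h g]

lemma Amat_mul_Bmat (g h : CC F K) : Amat F K g * Bmat F K h = Bmat F K (g⁻¹ * h) := by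
  rw [Amat_mul]
  ext α β
  simp only [Bmat, Matrix.of_apply, smul_mem_srel_left_iff]

lemma Bmat_mul_Amat (g h : CC F K) : Bmat F K h * Amat F K g = Bmat F K (g * h) := by
  rw [mul_Amat]
  ext α β
  simp only [Bmat, Matrix.of_apply, smul_mem_srel_right_iff, inv_inv]

lemma commute_Amat_Bmat_iff (g h : CC F K) :
    Commute (Amat F K g) (Bmat F K h) ↔ g⁻¹ = g := by
  rw [Commute, SemiconjBy, Amat_mul_Bmat, Bmat_mul_Amat, Bmat_injective.eq_iff, mul_left_inj]

lemma commute_Bmat_Bmat_of_forall_inv_eq_self (hC : ∀ g : CC F K, g⁻¹ = g) (g h : CC F K) :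
    Commute (Bmat F K g) (Bmat F K h) := by
  have hB : ∀ g : CC F K, Bmat F K g = Bmat F K 1 * Amat F K g := fun g => by
    rw [Bmat_mul_Amat, mul_one]
  have hB' : ∀ g : CC F K, Bmat F K g = Amat F K g * Bmat F K 1 := fun g => by
    rw [Amat_mul_Bmat, mul_one, hC]
  calc Bmat F K g * Bmat F K h = Bmat F K 1 * (Amat F K g * Amat F K h) * Bmat F K 1 := by
        rw [hB g, hB' h]; simp only [mul_assoc]
    _ = Bmat F K 1 * (Amat F K h * Amat F K g) * Bmat F K 1 := by
        rw [Amat_mul_Amat, Amat_mul_Amat, mul_comm g h]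
    _ = Bmat F K h * Bmat F K g := by
        rw [hB h, hB' g]; simp only [mul_assoc]

lemma pairwise_commute_iff :
    (∀ M ∈ Set.range (Amat F K) ∪ Set.range (Bmat F K),
        ∀ N ∈ Set.range (Amat F K) ∪ Set.range (Bmat F K), Commute M N) ↔
      ∀ g : CC F K, g⁻¹ = g := by
  constructor
  · intro hcomm g
    exact (commute_Amat_Bmat_iff g 1).mp (hcomm _ (Or.inl ⟨g, rfl⟩) _ (Or.inr ⟨1, rfl⟩))
  · rintro hC M (⟨g, rfl⟩ | ⟨g, rfl⟩) N (⟨h, rfl⟩ | ⟨h, rfl⟩)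
    · rw [Commute, SemiconjBy, Amat_mul_Amat, Amat_mul_Amat, mul_comm g h]
    · exact (commute_Amat_Bmat_iff g h).mpr (hC g)
    · exact ((commute_Amat_Bmat_iff h g).mpr (hC h)).symm
    · exact commute_Bmat_Bmat_of_forall_inv_eq_self hC g h

end Tatra

open Tatra in
theorem stmt_4_general (F : Type) [Field F] [Fintype F] (K : Subgroup Fˣ) (n : ℕ)
    (hn : K.index = n) :
    ((∀ M ∈ Set.range (Amat F K) ∪ Set.range (Bmat F K),
        ∀ N ∈ Set.range (Amat F K) ∪ Set.range (Bmat F K), M * N = N * M) ↔ n ≤ 2) ∧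
    ((∃ M ∈ Set.range (Amat F K) ∪ Set.range (Bmat F K),
        ∃ N ∈ Set.range (Amat F K) ∪ Set.range (Bmat F K), M * N ≠ N * M) ↔ 3 ≤ n) := by
  have hcomm : (∀ M ∈ Set.range (Amat F K) ∪ Set.range (Bmat F K),
      ∀ N ∈ Set.range (Amat F K) ∪ Set.range (Bmat F K), M * N = N * M) ↔ n ≤ 2 := by
    rw [← hn, Subgroup.index_eq_card, ← forall_inv_eq_self_iff_card_le_two]
    exact pairwise_commute_iff
  refine ⟨hcomm, ?_⟩
  have hncomm := hcomm.not
  push Not at hncomm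
  exact hncomm

open Tatra in
/-- the matrices in `{A_g : g ∈ C} ∪ {B_g : g ∈ C}` pairwise commute
iff `n ≤ 2`; equivalently, some two of them fail to commute iff `n ≥ 3`. -/
theorem stmt_4 (F : Type) [Field F] [Fintype F] (K : Subgroup Fˣ) (q n : ℕ)
    (hq : Fintype.card F = q) (hn : K.index = n) (hnd : n ∣ q - 1)
    (heven : Even (q * ((q - 1) / n))) :
    ((∀ M ∈ Set.range (Amat F K) ∪ Set.range (Bmat F K),
        ∀ N ∈ Set.range (Amat F K) ∪ Set.range (Bmat F K), M * N = N * M) ↔ n ≤ 2) ∧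
    ((∃ M ∈ Set.range (Amat F K) ∪ Set.range (Bmat F K),
        ∃ N ∈ Set.range (Amat F K) ∪ Set.range (Bmat F K), M * N ≠ N * M) ↔ 3 ≤ n) :=
  stmt_4_general F K n hn
end

section
/- Let g ∈ C, α₀ ∈ Ω, and let Λ = Cα be a line with Λ ≠ Cα₀. Then there exists a unique α ∈ Λ such that (α₀,α) ∈ s_g. -/
open Classical Matrix

namespace Tatra

lemma exists_units_smul_of_mul_eq_mul {F : Type} [Field F] {u v : Fin 2 → F} (hv : v ≠ 0)
    (h : u 0 * v 1 = u 1 * v 0) (hu : u 0 ≠ 0 ∨ u 1 ≠ 0) : ∃ t : Fˣ, (t : F) • u = v := by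
  suffices ∃ t : F, t • u = v by
    obtain ⟨t, rfl⟩ := this
    exact ⟨Units.mk0 t (left_ne_zero_of_smul hv), rfl⟩
  rcases hu with hu₀ | hu₁
  · refine ⟨v 0 / u 0, funext fun i => ?_⟩
    fin_cases i
    · simp [hu₀]
    · simp only [Fin.mk_one, Pi.smul_apply, smul_eq_mul]
      field_simp
      linear_combination -h
  · refine ⟨v 1 / u 1, funext fun i => ?_⟩
    fin_cases i
    · simp only [Fin.zero_eta, Pi.smul_apply, smul_eq_mul]
      field_simp
      linear_combination h
    · simp [hu₁]

variable {F : Type} [Field F] {K : Subgroup Fˣ}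

def smulV (c : Fˣ) (u : {w : Fin 2 → F // w ≠ 0}) : {w : Fin 2 → F // w ≠ 0} :=
  ⟨(c : F) • u.1, smul_ne_zero c.ne_zero u.2⟩

lemma dt_smulV_left (c : Fˣ) (u v : {w : Fin 2 → F // w ≠ 0}) :
    dt F (smulV c u) v = c * dt F u v := by
  simp only [dt, smulV, Pi.smul_apply, smul_eq_mul]
  ring

lemma dt_smulV_right (c : Fˣ) (u v : {w : Fin 2 → F // w ≠ 0}) :
    dt F u (smulV c v) = c * dt F u v := by
  simp only [dt, smulV, Pi.smul_apply, smul_eq_mul]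
  ring

lemma exists_smulV_eq_of_dt_eq_zero {u v : {w : Fin 2 → F // w ≠ 0}} (h : dt F u v = 0) :
    ∃ t : Fˣ, smulV t u = v := by
  have hu : u.1 0 ≠ 0 ∨ u.1 1 ≠ 0 := by
    by_contra! hu
    exact u.2 (funext fun i => by fin_cases i <;> simp [hu.1, hu.2])
  obtain ⟨t, ht⟩ := exists_units_smul_of_mul_eq_mul v.2 (sub_eq_zero.mp h) hu
  exact ⟨t, Subtype.ext ht⟩

lemma mk_smulV_eq_mk_smulV {c c' : Fˣ} (h : (c : CC F K) = c') (u : {w : Fin 2 → F // w ≠ 0}) :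
    Quotient.mk (ksetoid F K) (smulV c u) = Quotient.mk (ksetoid F K) (smulV c' u) := by
  refine Quotient.sound ⟨c⁻¹ * c', QuotientGroup.eq.mp h, ?_⟩
  simp only [smulV, smul_smul, Units.val_mul, Units.val_inv_eq_inv_val]
  rw [mul_right_comm, inv_mul_cancel₀ c.ne_zero, one_mul]

lemma mem_line_mk_iff (u : {w : Fin 2 → F // w ≠ 0}) (β : Om F K) :
    β ∈ line F K (Quotient.mk (ksetoid F K) u) ↔
      ∃ c : Fˣ, β = Quotient.mk (ksetoid F K) (smulV c u) := by
  constructor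
  · rintro ⟨-, u', v, y, hu', rfl, -, hv⟩
    obtain ⟨x, -, hx⟩ := Quotient.exact hu'.symm
    refine ⟨y * x, congrArg _ (Subtype.ext ?_)⟩
    simp only [smulV, ← hv, ← hx, smul_smul, Units.val_mul]
  · rintro ⟨c, rfl⟩
    exact ⟨c, u, smulV c u, c, rfl, rfl, rfl, rfl⟩

lemma line_mk_smulV (t : Fˣ) (u : {w : Fin 2 → F // w ≠ 0}) :
    line F K (Quotient.mk (ksetoid F K) (smulV t u)) = line F K (Quotient.mk (ksetoid F K) u) := by
  have smulV_smulV (c : Fˣ) : smulV c (smulV t u) = smulV (c * t) u :=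
    Subtype.ext (by simp [smulV, smul_smul])
  ext β
  simp only [mem_line_mk_iff, smulV_smulV]
  exact ⟨fun ⟨c, hc⟩ => ⟨c * t, hc⟩, fun ⟨c, hc⟩ => ⟨c * t⁻¹, by simpa using hc⟩⟩

lemma dt_ne_zero_of_line_ne {u v : {w : Fin 2 → F // w ≠ 0}}
    (h : line F K (Quotient.mk (ksetoid F K) v) ≠ line F K (Quotient.mk (ksetoid F K) u)) :
    dt F u v ≠ 0 := by
  intro h0
  obtain ⟨t, rfl⟩ := exists_smulV_eq_of_dt_eq_zero h0
  exact h (line_mk_smulV t u)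

/-- Any representatives will do, since `det(xu, zv) = xz det(u, v)` with `xz ∈ K`. -/
lemma mk_mk_mem_srel_iff (u v : {w : Fin 2 → F // w ≠ 0}) (g : CC F K) :
    (Quotient.mk (ksetoid F K) u, Quotient.mk (ksetoid F K) v) ∈ srel F K g ↔
      ∃ y : Fˣ, (y : CC F K) = g ∧ (y : F) = dt F u v := by
  constructor
  · rintro ⟨u', v', y, hu', hv', rfl, hy⟩
    obtain ⟨x, hx, hxu⟩ := Quotient.exact hu'
    obtain ⟨z, hz, hzv⟩ := Quotient.exact hv'
    refine ⟨y * (x * z), QuotientGroup.mk_mul_of_mem y (K.mul_mem hx hz), ?_⟩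
    obtain rfl : u = smulV x u' := Subtype.ext hxu.symm
    obtain rfl : v = smulV z v' := Subtype.ext hzv.symm
    rw [dt_smulV_left, dt_smulV_right, ← hy]
    push_cast
    ring
  · rintro ⟨y, hyg, hyd⟩
    exact ⟨u, v, y, rfl, rfl, hyg, hyd⟩

lemma mk_mk_smulV_mem_srel_iff {u v : {w : Fin 2 → F // w ≠ 0}} (hd : dt F u v ≠ 0) (c : Fˣ)
    (g : CC F K) :
    (Quotient.mk (ksetoid F K) u, Quotient.mk (ksetoid F K) (smulV c v)) ∈ srel F K g ↔
      ((c * Units.mk0 _ hd : Fˣ) : CC F K) = g := by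
  rw [mk_mk_mem_srel_iff, dt_smulV_right]
  constructor
  · rintro ⟨y, rfl, hy⟩
    rw [show c * Units.mk0 _ hd = y from Units.ext (by simp [hy])]
  · rintro rfl
    exact ⟨_, rfl, by simp⟩

end Tatra

open Tatra in
theorem stmt_6_general (F : Type) [Field F] (K : Subgroup Fˣ)
    (g : CC F K) (α₀ α₁ : Om F K) (hne : line F K α₁ ≠ line F K α₀) :
    ∃! α : Om F K, α ∈ line F K α₁ ∧ (α₀, α) ∈ srel F K g := by
  obtain ⟨u₀, rfl⟩ := α₀.exists_rep
  obtain ⟨u₁, rfl⟩ := α₁.exists_rep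
  have hd := dt_ne_zero_of_line_ne hne
  set d := Units.mk0 _ hd
  obtain ⟨y, rfl⟩ := QuotientGroup.mk_surjective g
  -- the points of `Cα₁` are the `K(c u₁)`, and `det(u₀, c u₁) = c d` lies in `yK` iff `cK = y d⁻¹ K`
  refine ⟨Quotient.mk _ (smulV (y * d⁻¹) u₁),
    ⟨(mem_line_mk_iff u₁ _).mpr ⟨_, rfl⟩, (mk_mk_smulV_mem_srel_iff hd _ _).mpr (by simp [d])⟩, ?_⟩
  rintro β ⟨hβ, hs⟩
  obtain ⟨c, rfl⟩ := (mem_line_mk_iff u₁ β).mp hβ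
  rw [mk_mk_smulV_mem_srel_iff hd] at hs
  refine mk_smulV_eq_mk_smulV ?_ u₁
  rw [QuotientGroup.mk_mul, ← hs, QuotientGroup.mk_mul, QuotientGroup.mk_inv]
  exact (mul_inv_cancel_right _ _).symm

open Tatra in
/-- if `Λ = Cα₁` is a line different from `Cα₀`, then there is a unique
`α ∈ Λ` with `(α₀, α) ∈ s_g`. -/
theorem stmt_6 (F : Type) [Field F] [Fintype F] (K : Subgroup Fˣ) (q n : ℕ)
    (hq : Fintype.card F = q) (hn : K.index = n) (hnd : n ∣ q - 1)
    (heven : Even (q * ((q - 1) / n)))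
    (g : CC F K) (α₀ α₁ : Om F K) (hne : line F K α₁ ≠ line F K α₀) :
    ∃! α : Om F K, α ∈ line F K α₁ ∧ (α₀, α) ∈ srel F K g :=
  stmt_6_general F K g α₀ α₁ hne
end

section
/- For every invertible 2×2 matrix T over F, every field automorphism σ of F, and every g ∈ C: r_g^{f_{T,σ}} = r_{g^σ} and s_g^{f_{T,σ}} = s_{K·det(T)·g^σ}, where K·det(T) denotes the image of det(T) in C = Fˣ/K. -/
open Classical Matrix

/-!
A finite subgroup of the units of a domain is the group of `k`-th roots of unity for its order
`k`, so every field automorphism `σ` maps `K` onto itself and induces an automorphism of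
`C = Fˣ/K`. The map `v ↦ T·v^σ` is `σ`-semilinear and injective, so it carries `y • u = v`
to `σ y • (T·u^σ) = T·v^σ` and multiplies `det(u, v)` by `det T` after applying `σ`; since
`f_{T,σ}` is a bijection of `Ω`, this identifies the images of `r_g` and `s_g`.
-/

theorem Subgroup.mem_iff_pow_natCard_eq_one {R : Type*} [CommRing R] [IsDomain R]
    (K : Subgroup Rˣ) [Finite K] (x : Rˣ) : x ∈ K ↔ x ^ Nat.card K = 1 := by
  have hK : K = rootsOfUnity (Nat.card K) R := by
    refine Subgroup.eq_of_le_of_card_ge (fun y hy => ?_) (card_rootsOfUnity _ _)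
    have := congrArg Subtype.val (pow_card_eq_one' (x := (⟨y, hy⟩ : K)))
    rwa [Subgroup.coe_pow] at this
  conv_lhs => rw [hK]
  exact mem_rootsOfUnity _ _

theorem Subgroup.units_map_mem_iff {R : Type*} [CommRing R] [IsDomain R]
    (K : Subgroup Rˣ) [Finite K] {σ : R →+* R} (hσ : Function.Injective σ) (x : Rˣ) :
    Units.map σ.toMonoidHom x ∈ K ↔ x ∈ K := by
  rw [K.mem_iff_pow_natCard_eq_one, K.mem_iff_pow_natCard_eq_one, ← map_pow,
    (Units.map_injective hσ).eq_iff' (map_one _)]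

theorem QuotientGroup.mk_units_map_eq_iff {R : Type*} [CommRing R] [IsDomain R]
    {K : Subgroup Rˣ} [Finite K] {σ : R →+* R} (hσ : Function.Injective σ) {g g' : Rˣ ⧸ K}
    (hg' : ∀ y : Rˣ, (y : Rˣ ⧸ K) = g → (Units.map σ.toMonoidHom y : Rˣ ⧸ K) = g') (x : Rˣ) :
    (Units.map σ.toMonoidHom x : Rˣ ⧸ K) = g' ↔ (x : Rˣ ⧸ K) = g := by
  obtain ⟨y, rfl⟩ := QuotientGroup.mk_surjective g
  rw [← hg' y rfl, QuotientGroup.eq, QuotientGroup.eq, ← map_inv, ← map_mul,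
    K.units_map_mem_iff hσ]

theorem RingEquiv.units_map_surjective {R : Type*} [Semiring R] (σ : R ≃+* R) :
    Function.Surjective (Units.map (σ : R →+* R).toMonoidHom) :=
  (Units.mapEquiv σ.toMulEquiv).surjective

section SemilinearMulVec

variable {n R S : Type*} [Fintype n] [CommRing R] [FunLike S R R] [RingHomClass S R R]

theorem Matrix.injective_mulVec_map [DecidableEq n] {T : Matrix n n R} (hT : IsUnit T)
    {σ : R → R} (hσ : Function.Injective σ) :
    Function.Injective fun v : n → R => T *ᵥ fun i => σ (v i) := by
  intro v w h
  funext i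
  exact hσ (congrFun (Matrix.mulVec_injective_of_isUnit hT h) i)

theorem Matrix.mulVec_map_eq_zero_iff [DecidableEq n] {T : Matrix n n R} (hT : IsUnit T)
    {σ : S} (hσ : Function.Injective σ) (v : n → R) :
    (T *ᵥ fun i => σ (v i)) = 0 ↔ v = 0 :=
  (Matrix.injective_mulVec_map hT hσ).eq_iff' (by simp [← Pi.zero_def])

theorem Matrix.mulVec_map_smul (T : Matrix n n R) (σ : S) (c : R) (v : n → R) :
    (T *ᵥ fun i => σ ((c • v) i)) = σ c • T *ᵥ fun i => σ (v i) := by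
  rw [← Matrix.mulVec_smul]
  congr 1
  funext i
  simp

end SemilinearMulVec

namespace Tatra

variable {F : Type} [Field F] {K : Subgroup Fˣ}

theorem mk_mem_rrel_iff {g : CC F K} {u v : {w : Fin 2 → F // w ≠ 0}} :
    (Quotient.mk (ksetoid F K) u, Quotient.mk (ksetoid F K) v) ∈ rrel F K g ↔
      ∃ y : Fˣ, (y : CC F K) = g ∧ (y : F) • u.1 = v.1 := by
  constructor
  · rintro ⟨u', v', y, hu, hv, rfl, hy⟩
    obtain ⟨a, ha, hau⟩ := Quotient.exact hu
    obtain ⟨b, hb, hbv⟩ := Quotient.exact hv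
    refine ⟨b * y * a⁻¹, ?_, ?_⟩
    · rw [QuotientGroup.mk_mul_of_mem _ (K.inv_mem ha), mul_comm, QuotientGroup.mk_mul_of_mem _ hb]
    · rw [← hau, ← hbv, ← hy, smul_smul, smul_smul, ← Units.val_mul, inv_mul_cancel_right,
        Units.val_mul]
  · rintro ⟨y, hy, hyuv⟩
    exact ⟨u, v, y, rfl, rfl, hy, hyuv⟩

theorem mk_mem_srel_iff {g : CC F K} {u v : {w : Fin 2 → F // w ≠ 0}} :
    (Quotient.mk (ksetoid F K) u, Quotient.mk (ksetoid F K) v) ∈ srel F K g ↔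
      ∃ y : Fˣ, (y : CC F K) = g ∧ (y : F) = dt F u v := by
  constructor
  · rintro ⟨u', v', y, hu, hv, rfl, hy⟩
    obtain ⟨a, ha, hau⟩ := Quotient.exact hu
    obtain ⟨b, hb, hbv⟩ := Quotient.exact hv
    refine ⟨a * b * y, ?_, ?_⟩
    · rw [mul_comm, QuotientGroup.mk_mul_of_mem _ (K.mul_mem ha hb)]
    · simp only [dt, ← hau, ← hbv, Pi.smul_apply, smul_eq_mul, Units.val_mul, hy]
      ring
  · rintro ⟨y, hy, hyuv⟩
    exact ⟨u, v, y, rfl, rfl, hy, hyuv⟩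

theorem relImage_eq_of_forall_mk_mem_iff {f : Equiv.Perm (Om F K)}
    {φ : {w : Fin 2 → F // w ≠ 0} → {w : Fin 2 → F // w ≠ 0}}
    (hf : ∀ u, f (Quotient.mk (ksetoid F K) u) = Quotient.mk (ksetoid F K) (φ u))
    {t t' : Set (Om F K × Om F K)}
    (h : ∀ u v, (Quotient.mk (ksetoid F K) (φ u), Quotient.mk (ksetoid F K) (φ v)) ∈ t' ↔
      (Quotient.mk (ksetoid F K) u, Quotient.mk (ksetoid F K) v) ∈ t) :
    relImage F K f t = t' := by
  have hpre : (f.prodCongr f) ⁻¹' t' = t := by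
    ext ⟨α, β⟩
    induction α using Quotient.ind
    induction β using Quotient.ind
    simp only [Set.mem_preimage, Equiv.prodCongr_apply, Prod.map, hf, h]
  exact (((f.prodCongr f).preimage_eq_iff_eq_image t' t).1 hpre).symm

variable {T : Matrix (Fin 2) (Fin 2) F}

def twist (hT : IsUnit T) (σ : F ≃+* F) (u : {w : Fin 2 → F // w ≠ 0}) :
    {w : Fin 2 → F // w ≠ 0} :=
  ⟨T *ᵥ fun i => σ (u.1 i), (Matrix.mulVec_map_eq_zero_iff hT σ.injective u.1).not.2 u.2⟩

variable (hT : IsUnit T) (σ : F ≃+* F)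

theorem twist_val (u : {w : Fin 2 → F // w ≠ 0}) :
    (twist hT σ u).1 = T *ᵥ fun i => σ (u.1 i) :=
  rfl

theorem smul_twist_eq_twist_iff (c : F) (u v : {w : Fin 2 → F // w ≠ 0}) :
    σ c • (twist hT σ u).1 = (twist hT σ v).1 ↔ c • u.1 = v.1 := by
  rw [twist_val, twist_val, ← Matrix.mulVec_map_smul T σ,
    (Matrix.injective_mulVec_map hT σ.injective).eq_iff]

theorem dt_twist (u v : {w : Fin 2 → F // w ≠ 0}) :
    dt F (twist hT σ u) (twist hT σ v) = T.det * σ (dt F u v) := by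
  simp only [dt, twist_val, Matrix.mulVec, dotProduct, Fin.sum_univ_two, Matrix.det_fin_two,
    map_sub, map_mul]
  ring

variable [Finite F] {g g' : CC F K}

theorem mk_twist_mem_rrel_iff
    (hg' : ∀ y : Fˣ, (QuotientGroup.mk y : CC F K) = g →
      (QuotientGroup.mk (Units.map (σ : F →+* F).toMonoidHom y) : CC F K) = g')
    (u v : {w : Fin 2 → F // w ≠ 0}) :
    (Quotient.mk (ksetoid F K) (twist hT σ u), Quotient.mk (ksetoid F K) (twist hT σ v)) ∈
        rrel F K g' ↔ (Quotient.mk (ksetoid F K) u, Quotient.mk (ksetoid F K) v) ∈ rrel F K g := by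
  rw [mk_mem_rrel_iff, mk_mem_rrel_iff, σ.units_map_surjective.exists]
  exact exists_congr fun x => and_congr (QuotientGroup.mk_units_map_eq_iff σ.injective hg' x)
    (smul_twist_eq_twist_iff hT σ x u v)

theorem mk_twist_mem_srel_iff
    (hg' : ∀ y : Fˣ, (QuotientGroup.mk y : CC F K) = g →
      (QuotientGroup.mk (Units.map (σ : F →+* F).toMonoidHom y) : CC F K) = g')
    {y₀ : Fˣ} (hy₀ : (y₀ : F) = T.det) (u v : {w : Fin 2 → F // w ≠ 0}) :
    (Quotient.mk (ksetoid F K) (twist hT σ u), Quotient.mk (ksetoid F K) (twist hT σ v)) ∈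
        srel F K ((y₀ : CC F K) * g') ↔
      (Quotient.mk (ksetoid F K) u, Quotient.mk (ksetoid F K) v) ∈ srel F K g := by
  have hsurj : Function.Surjective fun x => y₀ * Units.map (σ : F →+* F).toMonoidHom x :=
    (mul_left_surjective y₀).comp σ.units_map_surjective
  rw [mk_mem_srel_iff, mk_mem_srel_iff, hsurj.exists]
  refine exists_congr fun x => and_congr ?_ ?_
  · rw [QuotientGroup.mk_mul, mul_right_inj,
      QuotientGroup.mk_units_map_eq_iff σ.injective hg']
  · rw [dt_twist, Units.val_mul, hy₀, mul_right_inj' (hy₀ ▸ y₀.ne_zero)]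
    exact σ.injective.eq_iff

end Tatra

open Tatra in
theorem stmt_7_general (F : Type) [Field F] [Fintype F] (K : Subgroup Fˣ)
    (T : Matrix (Fin 2) (Fin 2) F) (hT : IsUnit T) (σ : F ≃+* F)
    (f : Equiv.Perm (Om F K)) (hf : Implements F K T σ f)
    (g g' : CC F K)
    (hg' : ∀ y : Fˣ, (QuotientGroup.mk y : CC F K) = g →
      (QuotientGroup.mk (Units.map (σ : F →+* F).toMonoidHom y) : CC F K) = g')
    (y₀ : Fˣ) (hy₀ : (y₀ : F) = T.det) :
    relImage F K f (rrel F K g) = rrel F K g' ∧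
    relImage F K f (srel F K g) = srel F K ((QuotientGroup.mk y₀ : CC F K) * g') := by
  have hφ : ∀ u, f (Quotient.mk (ksetoid F K) u) = Quotient.mk (ksetoid F K) (twist hT σ u) :=
    fun u => hf u _ rfl
  exact ⟨relImage_eq_of_forall_mk_mem_iff hφ (mk_twist_mem_rrel_iff hT σ hg'),
    relImage_eq_of_forall_mk_mem_iff hφ (mk_twist_mem_srel_iff hT σ hg' hy₀)⟩

open Tatra in
/-- for every invertible `T`, field automorphism `σ`, and `g ∈ C`:
`r_g^{f_{T,σ}} = r_{g^σ}` and `s_g^{f_{T,σ}} = s_{K·det(T)·g^σ}`. Here `g'` denotes the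
image `g^σ` of `g` under the automorphism of `C` induced by `σ`, and `y₀ ∈ Fˣ` is
`det T` viewed as a unit. -/
theorem stmt_7 (F : Type) [Field F] [Fintype F] (K : Subgroup Fˣ) (q n : ℕ)
    (hq : Fintype.card F = q) (hn : K.index = n) (hnd : n ∣ q - 1)
    (heven : Even (q * ((q - 1) / n)))
    (T : Matrix (Fin 2) (Fin 2) F) (hT : IsUnit T) (σ : F ≃+* F)
    (f : Equiv.Perm (Om F K)) (hf : Implements F K T σ f)
    (g g' : CC F K)
    (hg' : ∀ y : Fˣ, (QuotientGroup.mk y : CC F K) = g →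
      (QuotientGroup.mk (Units.map (σ : F →+* F).toMonoidHom y) : CC F K) = g')
    (y₀ : Fˣ) (hy₀ : (y₀ : F) = T.det) :
    relImage F K f (rrel F K g) = rrel F K g' ∧
    relImage F K f (srel F K g) = srel F K ((QuotientGroup.mk y₀ : CC F K) * g') :=
  stmt_7_general F K T hT σ f hf g g' hg' y₀ hy₀
end
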